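/- arXiv:1806.05878 — 3 statements merged into one kernel-verified Lean document; each statement's English description precedes it below -/
import Mathlib

section
/- Let n ≥ 1, k = 2 (so q = 4 and ζ = i), and let f : 𝔽₂ⁿ → ℤ₄ be a generalized Boolean function with binary digit decomposition f = a₀ + 2a₁. Fix a ∈ 𝔽₂ⁿ, an odd integer m ≥ 1 and an odd integer ℓ ≥ 1. Then |H_f(a)| = 2^{m/2}·ℓ if and only if there exist integers A, B with A² + B² = 2ℓ² such that, for the two component functions f₀ = a₁ and f₁ = a₀ ⊕ a₁, one has W_{f_c}(a) = 2^{(m−1)/2}·(A + (−1)^c B) for c ∈ {0,1}. -/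
open scoped BigOperators

/-- The primitive `q`-th complex root of unity `ζ_q = e^{2πi/q}`. -/
noncomputable def zetaQ (q : ℕ) : ℂ := Complex.exp (2 * Real.pi * Complex.I / q)

/-- The generalized Walsh–Hadamard transform of `f : 𝔽₂ⁿ → ℤ_q`. -/
noncomputable def gWHT {n : ℕ} (q : ℕ) (f : (Fin n → ZMod 2) → ZMod q)
    (u : Fin n → ZMod 2) : ℂ :=
  ∑ x : Fin n → ZMod 2, zetaQ q ^ (f x).val * (-1 : ℂ) ^ (∑ i, (u i * x i).val)

/-- The Walsh–Hadamard transform of a Boolean function `g : 𝔽₂ⁿ → 𝔽₂`. -/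
noncomputable def bWHT {n : ℕ} (g : (Fin n → ZMod 2) → ZMod 2)
    (u : Fin n → ZMod 2) : ℂ :=
  ∑ x : Fin n → ZMod 2, (-1 : ℂ) ^ (g x + ∑ i, u i * x i).val

/-- The `i`-th binary digit `a_i` of a function `f : 𝔽₂ⁿ → ℤ_{2^k}`. -/
def digit {n q : ℕ} (f : (Fin n → ZMod 2) → ZMod q) (i : ℕ)
    (x : Fin n → ZMod 2) : ZMod 2 :=
  (((f x).val / 2 ^ i : ℕ) : ZMod 2)

/-- The component function `f_c = c_0 a_0 ⊕ ⋯ ⊕ c_{k-2} a_{k-2} ⊕ a_{k-1}`. -/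
def comp {n k : ℕ} (f : (Fin n → ZMod 2) → ZMod (2 ^ k)) (c : Fin (k - 1) → ZMod 2)
    (x : Fin n → ZMod 2) : ZMod 2 :=
  (∑ j : Fin (k - 1), c j * digit f (j : ℕ) x) + digit f (k - 1) x

/-- The canonical bijection `ι : 𝔽₂^m → ℤ_{2^m}`. -/
def iotaF {m : ℕ} (d : Fin m → ZMod 2) : ZMod (2 ^ m) :=
  ∑ j : Fin m, ((d j).val : ZMod (2 ^ m)) * 2 ^ (j : ℕ)

/-- The inverse `ι⁻¹ : ℤ_{2^m} → 𝔽₂^m` of the canonical bijection. -/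
def invIota {m : ℕ} (g : ZMod (2 ^ m)) : Fin m → ZMod 2 :=
  fun j => ((g.val / 2 ^ (j : ℕ) : ℕ) : ZMod 2)

/-!
Since `ζ = i`, every value satisfies `2 i^{a₀ + 2a₁} = (1 + i)(-1)^{a₁} + (1 - i)(-1)^{a₀ + a₁}`,
so `2 H_f(a) = (1 + i) W₀ + (1 - i) W₁` with `W_c = W_{f_c}(a) ∈ ℤ`, and hence
`2 |H_f(a)|² = W₀² + W₁²`. For `m = 2t + 1` the norm condition reads `W₀² + W₁² = 4^{t+1} ℓ²`.
A sum of two squares divisible by `4` has both terms even, so `2^{t+1}` divides `W₀` and `W₁`,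
and `A + (-1)^c B = W_c / 2^t` is solved by `A, B = (W₀ ± W₁) / 2^{t+1}`.
-/

open Complex

lemma ZMod.forall_two {P : ZMod 2 → Prop} : (∀ c, P c) ↔ P 0 ∧ P 1 := Fin.forall_fin_two

lemma zetaQ_four : zetaQ (2 ^ 2) = I := by
  rw [zetaQ, show (2 * (Real.pi : ℂ) * I / ((2 ^ 2 : ℕ) : ℂ)) = Real.pi / 2 * I by push_cast; ring]
  exact exp_pi_div_two_mul_I

lemma neg_one_pow_val_natCast (e : ℕ) : (-1 : ℂ) ^ (e : ZMod 2).val = (-1) ^ e := by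
  rw [ZMod.val_natCast, ← neg_one_pow_eq_pow_mod_two]

lemma neg_one_pow_val_add (z w : ZMod 2) :
    (-1 : ℂ) ^ (z + w).val = (-1) ^ z.val * (-1) ^ w.val := by
  rw [ZMod.val_add, ← neg_one_pow_eq_pow_mod_two, pow_add]

lemma two_mul_I_pow_eq {w : ℕ} (hw : w < 4) :
    2 * I ^ w = (1 + I) * (-1) ^ (w / 2) + (1 - I) * (-1) ^ (w + w / 2) := by
  interval_cases w <;> norm_num [pow_succ] <;> ring

lemma comp_const_apply {n : ℕ} (f : (Fin n → ZMod 2) → ZMod (2 ^ 2)) (c : ZMod 2)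
    (x : Fin n → ZMod 2) : comp f (fun _ => c) x = c * digit f 0 x + digit f 1 x := by
  simp [comp]

lemma two_mul_I_pow_val_eq {n : ℕ} (f : (Fin n → ZMod 2) → ZMod (2 ^ 2)) (x : Fin n → ZMod 2) :
    2 * I ^ (f x).val = (1 + I) * (-1) ^ (comp f (fun _ => 0) x).val
      + (1 - I) * (-1) ^ (comp f (fun _ => 1) x).val := by
  simp only [comp_const_apply, digit, zero_mul, zero_add, one_mul, pow_zero, pow_one, Nat.div_one,
    neg_one_pow_val_add, neg_one_pow_val_natCast, ← pow_add]
  exact two_mul_I_pow_eq (f x).val_lt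

lemma neg_one_pow_sum_val {n : ℕ} (u x : Fin n → ZMod 2) :
    (-1 : ℂ) ^ (∑ i, (u i * x i).val) = (-1) ^ (∑ i, u i * x i).val := by
  rw [← neg_one_pow_val_natCast]
  push_cast [ZMod.natCast_val, ZMod.cast_id]
  rfl

lemma two_mul_gWHT_four {n : ℕ} (f : (Fin n → ZMod 2) → ZMod (2 ^ 2)) (a : Fin n → ZMod 2) :
    2 * gWHT (2 ^ 2) f a = (1 + I) * bWHT (comp f fun _ => 0) a
      + (1 - I) * bWHT (comp f fun _ => 1) a := by
  simp only [gWHT, bWHT, zetaQ_four, Finset.mul_sum, ← Finset.sum_add_distrib, neg_one_pow_val_add,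
    neg_one_pow_sum_val]
  refine Finset.sum_congr rfl fun x _ => ?_
  linear_combination (-1 : ℂ) ^ (∑ i, a i * x i).val * two_mul_I_pow_val_eq f x

lemma bWHT_eq_intCast {n : ℕ} (g : (Fin n → ZMod 2) → ZMod 2) (u : Fin n → ZMod 2) :
    bWHT g u = ((∑ x, (-1 : ℤ) ^ (g x + ∑ i, u i * x i).val : ℤ) : ℂ) := by
  push_cast [bWHT]
  rfl

lemma norm_sq_one_add_I_mul_add_one_sub_I_mul (x y : ℝ) :
    ‖(1 + I) * x + (1 - I) * y‖ ^ 2 = 2 * (x ^ 2 + y ^ 2) := by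
  rw [Complex.sq_norm, show (1 + I) * x + (1 - I) * y = ((x + y : ℝ) : ℂ) + ((x - y : ℝ) : ℂ) * I by
    push_cast; ring, Complex.normSq_add_mul_I]
  ring

lemma two_rpow_half_sq (m : ℕ) : ((2 : ℝ) ^ ((m : ℝ) / 2)) ^ 2 = 2 ^ m := by
  rw [← Real.rpow_mul_natCast zero_le_two]
  norm_num

lemma Int.even_and_even_of_four_dvd_sq_add_sq {x y : ℤ} (h : 4 ∣ x ^ 2 + y ^ 2) :
    Even x ∧ Even y := by
  rcases Int.even_or_odd' x with ⟨p, rfl | rfl⟩ <;> rcases Int.even_or_odd' y with ⟨q, rfl | rfl⟩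
  · exact ⟨even_two_mul p, even_two_mul q⟩
  all_goals exfalso; revert h; ring_nf; omega

lemma Int.two_pow_dvd_of_sq_dvd_sq_add_sq (s : ℕ) {x y : ℤ} (h : (2 ^ s) ^ 2 ∣ x ^ 2 + y ^ 2) :
    2 ^ s ∣ x ∧ 2 ^ s ∣ y := by
  induction s generalizing x y with
  | zero => simp
  | succ s ih =>
    obtain ⟨⟨p, rfl⟩, ⟨q, rfl⟩⟩ :=
      Int.even_and_even_of_four_dvd_sq_add_sq (dvd_trans (Dvd.intro_left ((2 ^ s) ^ 2) (by ring)) h)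
    have hpq : (2 ^ s) ^ 2 ∣ p ^ 2 + q ^ 2 :=
      Int.dvd_of_mul_dvd_mul_right four_ne_zero (by convert h using 1 <;> ring)
    obtain ⟨hp, hq⟩ := ih hpq
    rw [pow_succ', ← two_mul, ← two_mul]
    exact ⟨mul_dvd_mul_left 2 hp, mul_dvd_mul_left 2 hq⟩

lemma Int.sq_add_sq_eq_two_pow_sq_mul_sq_iff (t : ℕ) (x y l : ℤ) :
    x ^ 2 + y ^ 2 = (2 ^ (t + 1)) ^ 2 * l ^ 2 ↔
      ∃ A B : ℤ, A ^ 2 + B ^ 2 = 2 * l ^ 2 ∧ x = 2 ^ t * (A + B) ∧ y = 2 ^ t * (A - B) := by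
  constructor
  · intro h
    obtain ⟨⟨p, rfl⟩, ⟨q, rfl⟩⟩ :=
      Int.two_pow_dvd_of_sq_dvd_sq_add_sq (t + 1) (h ▸ dvd_mul_right _ _)
    have hpq : p ^ 2 + q ^ 2 = l ^ 2 :=
      mul_left_cancel₀ (pow_ne_zero 2 (pow_ne_zero (t + 1) two_ne_zero)) (by linear_combination h)
    exact ⟨p + q, p - q, by linear_combination 2 * hpq, by ring, by ring⟩
  · rintro ⟨A, B, hAB, rfl, rfl⟩
    linear_combination (2 ^ t) ^ 2 * 2 * hAB

theorem stmt6_general (n : ℕ)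
    (f : (Fin n → ZMod 2) → ZMod (2 ^ 2)) (a : Fin n → ZMod 2)
    (m ℓ : ℕ) (hm : Odd m) :
    ‖gWHT (2 ^ 2) f a‖ = (2 : ℝ) ^ ((m : ℝ) / 2) * ℓ ↔
      ∃ A B : ℤ, A ^ 2 + B ^ 2 = 2 * (ℓ : ℤ) ^ 2 ∧
        ∀ c : ZMod 2,
          bWHT (comp f (fun _ => c)) a =
            (2 : ℂ) ^ ((m - 1) / 2) * ((A : ℂ) + (-1 : ℂ) ^ c.val * (B : ℂ)) := by
  obtain ⟨t, rfl⟩ := hm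
  obtain ⟨W₀, hW₀⟩ : ∃ W : ℤ, bWHT (comp f fun _ => 0) a = W := ⟨_, bWHT_eq_intCast _ _⟩
  obtain ⟨W₁, hW₁⟩ : ∃ W : ℤ, bWHT (comp f fun _ => 1) a = W := ⟨_, bWHT_eq_intCast _ _⟩
  have hnorm : 2 * ‖gWHT (2 ^ 2) f a‖ ^ 2 = W₀ ^ 2 + W₁ ^ 2 := by
    have h := norm_sq_one_add_I_mul_add_one_sub_I_mul W₀ W₁
    rw [ofReal_intCast, ofReal_intCast, ← hW₀, ← hW₁, ← two_mul_gWHT_four, norm_mul, mul_pow] at h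
    norm_num at h
    linarith
  have hiff : ‖gWHT (2 ^ 2) f a‖ = (2 : ℝ) ^ ((↑(2 * t + 1) : ℝ) / 2) * ℓ ↔
      W₀ ^ 2 + W₁ ^ 2 = (2 ^ (t + 1)) ^ 2 * (ℓ : ℤ) ^ 2 := by
    rw [← pow_left_inj₀ (norm_nonneg _) (by positivity) two_ne_zero, mul_pow, two_rpow_half_sq,
      ← mul_right_inj' (two_ne_zero' ℝ), hnorm, ← Int.cast_inj (α := ℝ)]
    push_cast
    ring_nf
  rw [hiff, Int.sq_add_sq_eq_two_pow_sq_mul_sq_iff, show (2 * t + 1 - 1) / 2 = t by omega]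
  refine exists₂_congr fun A B => and_congr_right' (Iff.trans ?_ ZMod.forall_two.symm)
  rw [hW₀, hW₁, ZMod.val_zero, ZMod.val_one, pow_zero, pow_one, one_mul, neg_one_mul,
    ← sub_eq_add_neg]
  norm_cast

/-- Theorem 5(iv), `k = 2`: for `m, ℓ` odd, `|H_f(a)| = 2^{m/2}·ℓ` iff
there are integers `A, B` with `A² + B² = 2ℓ²` and
`W_{f_c}(a) = 2^{(m-1)/2}·(A + (−1)^c B)` for `c ∈ {0,1}`, where `f₀ = a₁` and
`f₁ = a₀ ⊕ a₁` are the component functions. -/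
theorem stmt6 (n : ℕ) (hn : 1 ≤ n)
    (f : (Fin n → ZMod 2) → ZMod (2 ^ 2)) (a : Fin n → ZMod 2)
    (m ℓ : ℕ) (hm : Odd m) (hm1 : 1 ≤ m) (hℓ : Odd ℓ) (hℓ1 : 1 ≤ ℓ) :
    ‖gWHT (2 ^ 2) f a‖ = (2 : ℝ) ^ ((m : ℝ) / 2) * ℓ ↔
      ∃ A B : ℤ, A ^ 2 + B ^ 2 = 2 * (ℓ : ℤ) ^ 2 ∧
        ∀ c : ZMod 2,
          bWHT (comp f (fun _ => c)) a =
            (2 : ℂ) ^ ((m - 1) / 2) * ((A : ℂ) + (-1 : ℂ) ^ c.val * (B : ℂ)) :=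
  stmt6_general n f a m ℓ hm
end

section
/- Let n ≥ 1, k ≥ 1, q = 2^k, a ∈ {0,1}, let f : 𝔽₂ⁿ → ℤ_q be a generalized Boolean function, and define g : 𝔽₂ⁿ × 𝔽₂ → ℤ_q by g(x,y) = f(x) + 2^{k−1}·a·y (viewing y ∈ {0,1} in ℤ_q). Then for every u ∈ 𝔽₂ⁿ and v ∈ 𝔽₂, H_g(u,v) = (1 + (−1)^{a+v})·H_f(u); in particular |H_g(u,v)| ∈ {0, 2|H_f(u)|}. -/
open scoped BigOperators

/-- Generalized Walsh–Hadamard transform for a function on `𝔽₂ⁿ × 𝔽₂`. -/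
noncomputable def gWHTx {n : ℕ} (q : ℕ) (g : (Fin n → ZMod 2) → ZMod 2 → ZMod q)
    (u : Fin n → ZMod 2) (v : ZMod 2) : ℂ :=
  ∑ x : Fin n → ZMod 2, ∑ y : ZMod 2,
    zetaQ q ^ (g x y).val * (-1 : ℂ) ^ ((∑ i, (u i * x i).val) + (v * y).val)

/-! Since `ζ^{2^{k-1}} = -1`, the `(x, y)` summand of `H_g(u, v)` is
`ζ^{f(x)} (-1)^{u·x} · (-1)^{(a+v) y}`, and summing the character `y ↦ (-1)^{(a+v) y}` over `𝔽₂`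
gives the factor `1 + (-1)^{a+v} ∈ {0, 2}`. -/

section RootsOfUnity

variable {M : Type*} [Monoid M] {q : ℕ} {z : M}

lemma pow_val_natCast_of_pow_eq_one (hz : z ^ q = 1) (m : ℕ) :
    z ^ (m : ZMod q).val = z ^ m := by
  rw [ZMod.val_natCast, ← pow_eq_pow_mod _ hz]

lemma pow_val_add_of_pow_eq_one [NeZero q] (hz : z ^ q = 1) (a b : ZMod q) :
    z ^ (a + b).val = z ^ a.val * z ^ b.val := by
  rw [ZMod.val_add, ← pow_eq_pow_mod _ hz, pow_add]

end RootsOfUnity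

lemma isPrimitiveRoot_zetaQ {q : ℕ} (hq : q ≠ 0) : IsPrimitiveRoot (zetaQ q) q :=
  Complex.isPrimitiveRoot_exp q hq

lemma zetaQ_two_pow_pow_half {k : ℕ} (hk : 1 ≤ k) : zetaQ (2 ^ k) ^ 2 ^ (k - 1) = -1 := by
  refine IsPrimitiveRoot.eq_neg_one_of_two_right ?_
  have h := (isPrimitiveRoot_zetaQ (by positivity : 2 ^ k ≠ 0)).pow_of_dvd
    (by positivity) (Nat.pow_dvd_pow 2 (Nat.sub_le k 1))
  rwa [Nat.pow_div (Nat.sub_le k 1) two_pos, Nat.sub_sub_self hk, pow_one] at h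

lemma sum_zmod_two_neg_one_pow_mul {R : Type*} [Ring R] (b : ZMod 2) :
    ∑ y : ZMod 2, (-1 : R) ^ (b * y).val = 1 + (-1) ^ b.val := by
  rw [show (Finset.univ : Finset (ZMod 2)) = {0, 1} from rfl, Finset.sum_pair zero_ne_one]
  simp

lemma zetaQ_two_pow_pow_val_add_half_mul {k : ℕ} (hk : 1 ≤ k) (t : ZMod (2 ^ k)) (m : ℕ) :
    zetaQ (2 ^ k) ^ (t + 2 ^ (k - 1) * (m : ZMod (2 ^ k))).val
      = zetaQ (2 ^ k) ^ t.val * (-1) ^ m := by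
  have hz := (isPrimitiveRoot_zetaQ (q := 2 ^ k) (by positivity)).pow_eq_one
  have : NeZero (2 ^ k) := ⟨by positivity⟩
  rw [pow_val_add_of_pow_eq_one hz,
    show (2 : ZMod (2 ^ k)) ^ (k - 1) * m = ((2 ^ (k - 1) * m : ℕ) : ZMod (2 ^ k)) by push_cast; rfl,
    pow_val_natCast_of_pow_eq_one hz, pow_mul, zetaQ_two_pow_pow_half hk]

lemma gWHTx_add_half_mul {n k : ℕ} (hk : 1 ≤ k) (a : ZMod 2)
    (f : (Fin n → ZMod 2) → ZMod (2 ^ k)) (u : Fin n → ZMod 2) (v : ZMod 2) :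
    gWHTx (2 ^ k)
        (fun x y => f x + 2 ^ (k - 1) * (a.val : ZMod (2 ^ k)) * (y.val : ZMod (2 ^ k))) u v
      = (1 + (-1 : ℂ) ^ (a + v).val) * gWHT (2 ^ k) f u := by
  have hsign (y : ZMod 2) :
      (-1 : ℂ) ^ (a.val * y.val) * (-1) ^ (v * y).val = (-1) ^ ((a + v) * y).val := by
    rw [← pow_val_natCast_of_pow_eq_one (q := 2) (neg_one_sq (R := ℂ)),
      ← pow_val_add_of_pow_eq_one (neg_one_sq (R := ℂ))]
    push_cast
    simp only [ZMod.natCast_val, ZMod.cast_id', id, add_mul]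
  unfold gWHTx gWHT
  rw [Finset.mul_sum]
  refine Finset.sum_congr rfl fun x _ => ?_
  simp_rw [mul_assoc _ (a.val : ZMod (2 ^ k)), ← Nat.cast_mul,
    zetaQ_two_pow_pow_val_add_half_mul hk, pow_add]
  calc ∑ y : ZMod 2, zetaQ (2 ^ k) ^ (f x).val * (-1 : ℂ) ^ (a.val * y.val) *
        ((-1 : ℂ) ^ (∑ i, (u i * x i).val) * (-1 : ℂ) ^ (v * y).val)
      = zetaQ (2 ^ k) ^ (f x).val * (-1 : ℂ) ^ (∑ i, (u i * x i).val) *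
          ∑ y : ZMod 2, (-1 : ℂ) ^ ((a + v) * y).val := by
        rw [Finset.mul_sum]
        refine Finset.sum_congr rfl fun y _ => ?_
        rw [← hsign]
        ring
    _ = _ := by
        rw [sum_zmod_two_neg_one_pow_mul]
        ring

lemma norm_one_add_neg_one_pow_mul (b : ZMod 2) (z : ℂ) :
    ‖(1 + (-1) ^ b.val) * z‖ = 0 ∨ ‖(1 + (-1) ^ b.val) * z‖ = 2 * ‖z‖ := by
  fin_cases b <;> norm_num [ZMod.val]

theorem stmt8_general (n k : ℕ) (hk : 1 ≤ k) (a : ZMod 2)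
    (f : (Fin n → ZMod 2) → ZMod (2 ^ k)) :
    ∀ (u : Fin n → ZMod 2) (v : ZMod 2),
      (gWHTx (2 ^ k)
          (fun x y => f x + 2 ^ (k - 1) * (a.val : ZMod (2 ^ k)) * (y.val : ZMod (2 ^ k)))
          u v
        = (1 + (-1 : ℂ) ^ (a + v).val) * gWHT (2 ^ k) f u) ∧
      (‖gWHTx (2 ^ k)
          (fun x y => f x + 2 ^ (k - 1) * (a.val : ZMod (2 ^ k)) * (y.val : ZMod (2 ^ k)))
          u v‖ = 0 ∨
       ‖gWHTx (2 ^ k)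
          (fun x y => f x + 2 ^ (k - 1) * (a.val : ZMod (2 ^ k)) * (y.val : ZMod (2 ^ k)))
          u v‖ = 2 * ‖gWHT (2 ^ k) f u‖) := by
  intro u v
  have htransform := gWHTx_add_half_mul hk a f u v
  exact ⟨htransform, htransform ▸ norm_one_add_neg_one_pow_mul (a + v) _⟩

/-- Proposition 7, transform computation: for
`g(x,y) = f(x) + 2^{k-1}·a·y` one has `H_g(u,v) = (1 + (−1)^{a+v})·H_f(u)`;
in particular `|H_g(u,v)| ∈ {0, 2|H_f(u)|}`. -/
theorem stmt8 (n k : ℕ) (hn : 1 ≤ n) (hk : 1 ≤ k) (a : ZMod 2)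
    (f : (Fin n → ZMod 2) → ZMod (2 ^ k)) :
    ∀ (u : Fin n → ZMod 2) (v : ZMod 2),
      (gWHTx (2 ^ k)
          (fun x y => f x + 2 ^ (k - 1) * (a.val : ZMod (2 ^ k)) * (y.val : ZMod (2 ^ k)))
          u v
        = (1 + (-1 : ℂ) ^ (a + v).val) * gWHT (2 ^ k) f u) ∧
      (‖gWHTx (2 ^ k)
          (fun x y => f x + 2 ^ (k - 1) * (a.val : ZMod (2 ^ k)) * (y.val : ZMod (2 ^ k)))
          u v‖ = 0 ∨
       ‖gWHTx (2 ^ k)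
          (fun x y => f x + 2 ^ (k - 1) * (a.val : ZMod (2 ^ k)) * (y.val : ZMod (2 ^ k)))
          u v‖ = 2 * ‖gWHT (2 ^ k) f u‖) :=
  stmt8_general n k hk a f
end

section
/- Let n ≥ 1, k ≥ 2, q = 2^k, and let f : 𝔽₂ⁿ → ℤ_q be a generalized Boolean function. Then the following are equivalent: (1) f is generalized bent; (2) for every x ∈ 𝔽₂ⁿ, Σ_{a,b ∈ 𝔽₂ⁿ} ζ^{D_b D_a f(x)} = 2^n; (3) Σ_{d ∈ 𝔽₂ⁿ} |H_f(d)|⁴ = 2^{3n}. -/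
open scoped BigOperators

/-!
Put `F = ζ^f` and let `C(a) = Σ_x F(x) · conj F(x + a)` be its autocorrelation. By the
Wiener–Khinchin identity `|H_f|²` is the Walsh transform of `C`, so Parseval gives
`Σ_u |H_f(u)|⁴ = 2ⁿ Σ_a |C(a)|²`; the second-derivative sum at `x` equals
`Σ_a F(x) conj F(x + a) conj C(a)`, whose sum over `x` is again `Σ_a |C(a)|²`.
As `|F| = 1` forces `C(0) = 2ⁿ`, each of the three conditions says exactly that `C` vanishes
off `0`.
-/

open Complex ComplexConjugate Finset

lemma zetaQ_pow_self (q : ℕ) [NeZero q] : zetaQ q ^ q = 1 :=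
  (Complex.isPrimitiveRoot_exp q (NeZero.ne q)).pow_eq_one

noncomputable def zetaChar (q : ℕ) [NeZero q] : AddChar (ZMod q) ℂ :=
  AddChar.zmodChar q (zetaQ_pow_self q)

section Walsh

variable {n : ℕ}

noncomputable def walshChar (u : Fin n → ZMod 2) : AddChar (Fin n → ZMod 2) ℂ where
  toFun x := (-1) ^ ∑ i, (u i * x i).val
  map_zero_eq_one' := by simp
  map_add_eq_mul' x y := by
    let sign : AddChar (ZMod 2) ℂ := AddChar.zmodChar 2 (ζ := -1) (by norm_num)
    simp only [Pi.add_apply, ← prod_pow_eq_pow_sum, ← prod_mul_distrib, mul_add]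
    exact prod_congr rfl fun i _ => sign.map_add_eq_mul _ _

lemma walshChar_apply (u x : Fin n → ZMod 2) :
    walshChar u x = (-1) ^ ∑ i, (u i * x i).val := rfl

lemma walshChar_comm (u x : Fin n → ZMod 2) : walshChar u x = walshChar x u := by
  simp only [walshChar_apply, mul_comm]

lemma walshChar_eq_zero_iff {u : Fin n → ZMod 2} : walshChar u = 0 ↔ u = 0 := by
  refine ⟨fun h => ?_, fun h => by ext x; simp [h, walshChar_apply]⟩
  by_contra hu
  obtain ⟨i, hi⟩ := Function.ne_iff.mp hu
  have hui : u i = 1 := by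
    have : ∀ c : ZMod 2, c ≠ 0 → c = 1 := by decide
    exact this _ hi
  have := AddChar.eq_zero_iff.mp h (Pi.single i 1)
  simp only [walshChar_apply, Pi.single_apply, mul_ite, mul_one, mul_zero] at this
  rw [Finset.sum_eq_single i (fun j _ hj => by simp [hj]) (by simp), if_pos rfl, hui] at this
  norm_num [ZMod.val_one] at this

lemma sum_walshChar (u : Fin n → ZMod 2) :
    ∑ x, walshChar u x = if u = 0 then (2 : ℂ) ^ n else 0 := by
  classical
  simp [AddChar.sum_eq_ite, walshChar_eq_zero_iff]

lemma sum_walshChar_apply (x : Fin n → ZMod 2) :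
    ∑ u, walshChar u x = if x = 0 then (2 : ℂ) ^ n else 0 := by
  simp only [walshChar_comm _ x, sum_walshChar]

end Walsh

section Spectrum

variable {n : ℕ}

noncomputable def walsh (g : (Fin n → ZMod 2) → ℂ) (u : Fin n → ZMod 2) : ℂ :=
  ∑ x, g x * walshChar u x

noncomputable def autocorr (g : (Fin n → ZMod 2) → ℂ) (a : Fin n → ZMod 2) : ℂ :=
  ∑ x, g x * conj (g (x + a))

lemma walsh_mul_conj (g : (Fin n → ZMod 2) → ℂ) (u : Fin n → ZMod 2) :
    walsh g u * conj (walsh g u) = ∑ x, ∑ y, g x * conj (g y) * walshChar u (x - y) := by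
  simp only [walsh, map_sum, map_mul, sum_mul_sum, sub_eq_add_neg, AddChar.map_add_eq_mul,
    AddChar.map_neg_eq_conj]
  exact sum_congr rfl fun x _ => sum_congr rfl fun y _ => by ring

lemma sum_norm_walsh_sq (g : (Fin n → ZMod 2) → ℂ) :
    ∑ u, ‖walsh g u‖ ^ 2 = 2 ^ n * ∑ x, ‖g x‖ ^ 2 := by
  refine Complex.ofReal_injective ?_
  push_cast
  calc ∑ u, (‖walsh g u‖ : ℂ) ^ 2
      = ∑ x, ∑ y, g x * conj (g y) * ∑ u, walshChar u (x - y) := by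
        simp only [← mul_conj', walsh_mul_conj, mul_sum]
        rw [sum_comm]
        exact sum_congr rfl fun x _ => sum_comm
    _ = 2 ^ n * ∑ x, (‖g x‖ : ℂ) ^ 2 := by
        simp only [sum_walshChar_apply, sub_eq_zero, mul_ite, mul_zero, sum_ite_eq, mem_univ,
          if_true, mul_sum, mul_conj']
        exact sum_congr rfl fun x _ => mul_comm _ _

lemma norm_walsh_sq (g : (Fin n → ZMod 2) → ℂ) (u : Fin n → ZMod 2) :
    (‖walsh g u‖ ^ 2 : ℂ) = walsh (autocorr g) u := by
  rw [← mul_conj', walsh_mul_conj, walsh]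
  simp only [autocorr, sum_mul]
  rw [sum_comm (s := univ) (t := univ) (f := fun a x => g x * conj (g (x + a)) * walshChar u a)]
  refine sum_congr rfl fun x _ => ?_
  rw [← Equiv.sum_comp (Equiv.addLeft x) (fun y => g x * conj (g y) * walshChar u (x - y))]
  refine sum_congr rfl fun a _ => ?_
  have ha : -a = a := funext fun i => ZMod.neg_eq_self_mod_two (a i)
  simp only [Equiv.coe_addLeft, sub_add_cancel_left, ha]

lemma sum_norm_walsh_pow_four (g : (Fin n → ZMod 2) → ℂ) :
    ∑ u, ‖walsh g u‖ ^ 4 = 2 ^ n * ∑ a, ‖autocorr g a‖ ^ 2 := by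
  rw [← sum_norm_walsh_sq]
  refine sum_congr rfl fun u _ => ?_
  rw [← norm_walsh_sq, norm_pow, Complex.norm_real, norm_norm, ← pow_mul]

lemma sum_sum_second_deriv_eq (g : (Fin n → ZMod 2) → ℂ) (x : Fin n → ZMod 2) :
    ∑ a, ∑ b, g x * conj (g (x + a)) * conj (g (x + b)) * g (x + a + b)
      = ∑ a, g x * conj (g (x + a)) * conj (autocorr g a) := by
  refine sum_congr rfl fun a _ => ?_
  rw [autocorr, map_sum, mul_sum, ← Equiv.sum_comp (Equiv.addLeft x) (fun y => _ * conj (_ * _))]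
  refine sum_congr rfl fun b _ => ?_
  simp only [Equiv.coe_addLeft, map_mul, conj_conj, add_right_comm x a b]
  ring

lemma sum_sum_sum_second_deriv_eq (g : (Fin n → ZMod 2) → ℂ) :
    ∑ x, ∑ a, ∑ b, g x * conj (g (x + a)) * conj (g (x + b)) * g (x + a + b)
      = ∑ a, (‖autocorr g a‖ ^ 2 : ℂ) := by
  simp only [sum_sum_second_deriv_eq, ← mul_conj', autocorr]
  rw [sum_comm]
  simp only [sum_mul]

end Spectrum

lemma sum_norm_sq_eq_norm_sq_iff {ι E : Type*} [Fintype ι] [NormedAddCommGroup E]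
    (h : ι → E) (i : ι) : ∑ j, ‖h j‖ ^ 2 = ‖h i‖ ^ 2 ↔ ∀ j ≠ i, h j = 0 := by
  classical
  rw [Fintype.sum_eq_add_sum_compl i, add_eq_left,
    sum_eq_zero_iff_of_nonneg fun j _ => sq_nonneg _]
  simp

lemma eq_two_rpow_half_iff {r : ℝ} (hr : 0 ≤ r) (n : ℕ) :
    r = 2 ^ ((n : ℝ) / 2) ↔ r ^ 2 = 2 ^ n := by
  have h : ((2 : ℝ) ^ ((n : ℝ) / 2)) ^ 2 = 2 ^ n := by
    rw [← Real.rpow_mul_natCast zero_le_two, ← Real.rpow_natCast]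
    norm_num
  rw [← h, pow_left_inj₀ hr (by positivity) two_ne_zero]

section Unimodular

variable {n : ℕ} {g : (Fin n → ZMod 2) → ℂ}

lemma autocorr_zero_of_norm_eq_one (hg : ∀ x, ‖g x‖ = 1) : autocorr g 0 = 2 ^ n := by
  simp [autocorr, mul_conj', hg]

lemma sum_norm_autocorr_sq_eq_iff (hg : ∀ x, ‖g x‖ = 1) :
    ∑ a, ‖autocorr g a‖ ^ 2 = 2 ^ (2 * n) ↔ ∀ a ≠ 0, autocorr g a = 0 := by
  rw [← sum_norm_sq_eq_norm_sq_iff, autocorr_zero_of_norm_eq_one hg]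
  norm_num [pow_mul']

lemma sum_norm_walsh_pow_four_eq_iff (hg : ∀ x, ‖g x‖ = 1) :
    ∑ u, ‖walsh g u‖ ^ 4 = 2 ^ (3 * n) ↔ ∀ a ≠ 0, autocorr g a = 0 := by
  rw [sum_norm_walsh_pow_four, ← sum_norm_autocorr_sq_eq_iff hg,
    show 3 * n = n + 2 * n by ring, pow_add]
  exact mul_right_inj' (by positivity)

lemma norm_walsh_eq_iff (hg : ∀ x, ‖g x‖ = 1) :
    (∀ u, ‖walsh g u‖ = 2 ^ ((n : ℝ) / 2)) ↔ ∀ a ≠ 0, autocorr g a = 0 := by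
  simp only [eq_two_rpow_half_iff (norm_nonneg _)]
  refine ⟨fun h => (sum_norm_walsh_pow_four_eq_iff hg).1 ?_, fun h u => ?_⟩
  · simp only [show 4 = 2 * 2 from rfl, pow_mul, h, sum_const, card_univ, Fintype.card_fun,
      ZMod.card, Fintype.card_fin, nsmul_eq_mul]
    push_cast
    rw [← pow_mul, ← pow_mul, ← pow_add]
    ring_nf
  · refine Complex.ofReal_injective ?_
    push_cast
    rw [norm_walsh_sq, walsh, sum_eq_single 0 (fun a _ ha => by rw [h a ha, zero_mul])
      (by simp), autocorr_zero_of_norm_eq_one hg, AddChar.map_zero_eq_one, mul_one]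

lemma sum_second_deriv_eq_iff (hg : ∀ x, ‖g x‖ = 1) :
    (∀ x, ∑ a, ∑ b, g x * conj (g (x + a)) * conj (g (x + b)) * g (x + a + b) = 2 ^ n) ↔
      ∀ a ≠ 0, autocorr g a = 0 := by
  refine ⟨fun h => (sum_norm_autocorr_sq_eq_iff hg).1 ?_, fun h x => ?_⟩
  · refine Complex.ofReal_injective ?_
    push_cast
    rw [← sum_sum_sum_second_deriv_eq]
    simp [h, pow_mul', sq]
  · rw [sum_sum_second_deriv_eq, sum_eq_single 0 (fun a _ ha => by rw [h a ha, map_zero, mul_zero])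
      (by simp), autocorr_zero_of_norm_eq_one hg, add_zero, mul_conj', hg]
    simp [map_ofNat]

end Unimodular

theorem stmt16_general (n k : ℕ) (f : (Fin n → ZMod 2) → ZMod (2 ^ k)) :
    ((∀ u, ‖gWHT (2 ^ k) f u‖ = (2 : ℝ) ^ ((n : ℝ) / 2)) ↔
      (∀ x : Fin n → ZMod 2,
        ∑ a : Fin n → ZMod 2, ∑ b : Fin n → ZMod 2,
          zetaQ (2 ^ k) ^ (f x - f (fun i => x i + a i) - f (fun i => x i + b i) +
            f (fun i => x i + a i + b i)).val
          = (2 : ℂ) ^ n)) ∧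
    ((∀ u, ‖gWHT (2 ^ k) f u‖ = (2 : ℝ) ^ ((n : ℝ) / 2)) ↔
      (∑ d : Fin n → ZMod 2, ‖gWHT (2 ^ k) f d‖ ^ 4 = (2 : ℝ) ^ (3 * n))) := by
  set ψ := zetaChar (2 ^ k)
  have hψ : ∀ x, ‖ψ (f x)‖ = 1 := fun x => ψ.norm_apply _
  have hD : ∀ x a b : Fin n → ZMod 2,
      zetaQ (2 ^ k) ^ (f x - f (fun i => x i + a i) - f (fun i => x i + b i) +
        f (fun i => x i + a i + b i)).val
        = ψ (f x) * conj (ψ (f (x + a))) * conj (ψ (f (x + b))) * ψ (f (x + a + b)) := by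
    intro x a b
    simp only [← AddChar.map_neg_eq_conj, ← AddChar.map_add_eq_mul, ← sub_eq_add_neg]
    rfl
  simp only [hD, show gWHT (2 ^ k) f = walsh fun x => ψ (f x) from rfl]
  exact ⟨(norm_walsh_eq_iff hψ).trans (sum_second_deriv_eq_iff hψ).symm,
    (norm_walsh_eq_iff hψ).trans (sum_norm_walsh_pow_four_eq_iff hψ).symm⟩

/-- Corollary 12: `f` is generalized bent iff
`Σ_{a,b} ζ^{D_b D_a f(x)} = 2^n` for all `x`, iff `Σ_d |H_f(d)|⁴ = 2^{3n}`. -/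
theorem stmt16 (n k : ℕ) (hn : 1 ≤ n) (hk : 2 ≤ k)
    (f : (Fin n → ZMod 2) → ZMod (2 ^ k)) :
    ((∀ u, ‖gWHT (2 ^ k) f u‖ = (2 : ℝ) ^ ((n : ℝ) / 2)) ↔
      (∀ x : Fin n → ZMod 2,
        ∑ a : Fin n → ZMod 2, ∑ b : Fin n → ZMod 2,
          zetaQ (2 ^ k) ^ (f x - f (fun i => x i + a i) - f (fun i => x i + b i) +
            f (fun i => x i + a i + b i)).val
          = (2 : ℂ) ^ n)) ∧
    ((∀ u, ‖gWHT (2 ^ k) f u‖ = (2 : ℝ) ^ ((n : ℝ) / 2)) ↔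
      (∑ d : Fin n → ZMod 2, ‖gWHT (2 ^ k) f d‖ ^ 4 = (2 : ℝ) ^ (3 * n))) :=
  stmt16_general n k f
end
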